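/- Let G be a walk-regular graph on n vertices with distinct eigenvalues θ_0 > ... > θ_d and predistance polynomials p_0, ..., p_d, with Hoffman polynomial H = p_0 + ... + p_d (so H(θ_0) = n and H(θ_i) = 0 for i ≥ 1). Let Λ = max_{0 ≤ i ≤ d} p_d(θ_i), and assume n + Λ − p_d(θ_0) > 0. Then α_{d−1}(G) ≤ n(1 + Λ)/(n + Λ − p_d(θ_0)). -/

import Mathlib

open Matrix Polynomial

/-- The `k`-independence number of a graph. -/
noncomputable def kIndepNum {V : Type*} [Fintype V] (G : SimpleGraph V) (k : ℕ) : ℕ :=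
  sSup {r | ∃ s : Finset V, s.card = r ∧ ∀ u ∈ s, ∀ v ∈ s, u ≠ v → k < G.dist u v}

/-!
`H` vanishes at every eigenvalue of `A` except `θ₀`, where it equals `n`, so `B = H(A)` satisfies
`B² = n B`. Orthogonality of the `p_i` gives `tr B² = n H(θ₀) = n²`, hence by walk-regularity
`B` has unit diagonal, and Cauchy–Schwarz on the rows of `B² = n B` then forces every entry of
`B` to be `±1`. On a `(d-1)`-independent set `S` the off-diagonal entries of `p_d(A)` agree with
those of `B`, because `p_0, …, p_{d-1}` have degree below the distance. Walk-regularity once more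
gives `p_d(θ₀) = (p_d(A)²)_{uu} = ∑_v p_d(A)_{uv}² ≥ |S| - 1`, and the bound follows from
`|S| ≤ n` and `p_d(θ₀) ≤ Λ`.
-/

namespace Matrix.IsHermitian

variable {V : Type*} [Fintype V] {A B : Matrix V V ℝ}

theorem aeval [DecidableEq V] (hA : A.IsHermitian) (f : ℝ[X]) :
    (Polynomial.aeval A f).IsHermitian := by
  rw [← cfc_polynomial f A hA.isSelfAdjoint]
  exact cfc_predicate _ A

theorem aeval_eq_zero_of_forall_mem_roots [DecidableEq V] (hA : A.IsHermitian) {f : ℝ[X]}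
    (hf : ∀ x ∈ A.charpoly.roots, f.eval x = 0) : Polynomial.aeval A f = 0 := by
  rw [← cfc_polynomial f A hA.isSelfAdjoint, ← cfc_zero ℝ A]
  refine cfc_congr fun x hx => hf x ?_
  obtain ⟨i, rfl⟩ := hA.spectrum_real_eq_range_eigenvalues ▸ hx
  rw [hA.roots_charpoly_eq_eigenvalues]
  exact Multiset.mem_map_of_mem _ (Finset.mem_univ i)

theorem aeval_mul_self_eq_smul [DecidableEq V] (hA : A.IsHermitian) {f : ℝ[X]} {c : ℝ}
    (hf : ∀ x ∈ A.charpoly.roots, f.eval x = 0 ∨ f.eval x = c) :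
    Polynomial.aeval A f * Polynomial.aeval A f = c • Polynomial.aeval A f := by
  have hvanish := hA.aeval_eq_zero_of_forall_mem_roots (f := f * (f - C c)) fun x hx => by
    rcases hf x hx with h | h <;> simp [h]
  rwa [map_mul, map_sub, aeval_C, Algebra.algebraMap_eq_smul_one, mul_sub, mul_smul_comm,
    mul_one, sub_eq_zero] at hvanish

theorem mul_self_apply_self (hB : B.IsHermitian) (u : V) : (B * B) u u = ∑ v, B u v ^ 2 := by
  simp only [mul_apply, sq, ← hB.apply u, star_trivial]

theorem apply_sq_eq_one_of_mul_self_eq_smul (hB : B.IsHermitian)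
    (hBB : B * B = (Fintype.card V : ℝ) • B) (hdiag : ∀ u, B u u = 1) (u v : V) :
    B u v ^ 2 = 1 := by
  set n : ℝ := (Fintype.card V : ℝ)
  have hn : 0 < n := Nat.cast_pos.mpr (Fintype.card_pos_iff.mpr ⟨u⟩)
  have hrow : ∀ w, ∑ x, B w x ^ 2 = n := fun w => by
    rw [← hB.mul_self_apply_self, hBB, smul_apply, hdiag, smul_eq_mul, mul_one]
  have hcol : ∀ x, ∑ w, B w x ^ 2 = n := fun x => by
    simp only [← hB.apply _ x, star_trivial, hrow]
  have hle : ∀ x, B u x ^ 2 ≤ 1 := fun x => by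
    have hcs : (n * B u x) ^ 2 ≤ n * n :=
      calc (n * B u x) ^ 2 = (∑ w, B u w * B w x) ^ 2 := by
            rw [← mul_apply, hBB, smul_apply, smul_eq_mul]
        _ ≤ (∑ w, B u w ^ 2) * ∑ w, B w x ^ 2 := Finset.sum_mul_sq_le_sq_mul_sq _ _ _
        _ = n * n := by rw [hrow, hcol]
    refine le_of_mul_le_mul_left ?_ (mul_pos hn hn)
    linarith [mul_pow n (B u x) 2]
  have hsum : ∑ x, (1 - B u x ^ 2) = 0 := by
    rw [Finset.sum_sub_distrib, hrow, Finset.sum_const, Finset.card_univ, nsmul_one, sub_self]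
  have hv := (Finset.sum_eq_zero_iff_of_nonneg fun x _ => sub_nonneg.mpr (hle x)).mp hsum v
    (Finset.mem_univ v)
  linarith

theorem aeval_apply_sq_eq_one [DecidableEq V] (hA : A.IsHermitian) {f : ℝ[X]}
    (hf : ∀ x ∈ A.charpoly.roots, f.eval x = 0 ∨ f.eval x = Fintype.card V)
    (htr : trace (Polynomial.aeval A (f * f)) = Fintype.card V * Fintype.card V)
    (hdiag : ∀ u, Polynomial.aeval A f u u = trace (Polynomial.aeval A f) / Fintype.card V)
    (u v : V) : Polynomial.aeval A f u v ^ 2 = 1 := by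
  have hn : (Fintype.card V : ℝ) ≠ 0 := Nat.cast_ne_zero.mpr (Fintype.card_pos_iff.mpr ⟨u⟩).ne'
  have hff := hA.aeval_mul_self_eq_smul hf
  refine (hA.aeval f).apply_sq_eq_one_of_mul_self_eq_smul hff (fun w => ?_) u v
  rw [hdiag, ← mul_div_mul_left _ _ hn, ← smul_eq_mul, ← trace_smul, ← hff, ← map_mul, htr,
    div_self (mul_ne_zero hn hn)]

end Matrix.IsHermitian

theorem trace_aeval_sum_mul_sum_of_orthogonal {V K : Type*} [Fintype V] [DecidableEq V] [Field K]
    {A : Matrix V V K} {p : ℕ → K[X]} {s : Finset ℕ} {x n : K} (hn : n ≠ 0)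
    (horth : ∀ i ∈ s, ∀ j ∈ s, i ≠ j → trace (aeval A (p i * p j)) = 0)
    (hnorm : ∀ i ∈ s, (p i).eval x = trace (aeval A (p i * p i)) / n) :
    trace (aeval A ((∑ i ∈ s, p i) * ∑ i ∈ s, p i)) = n * (∑ i ∈ s, p i).eval x := by
  rw [Finset.sum_mul_sum, map_sum, trace_sum, eval_finsetSum, Finset.mul_sum]
  refine Finset.sum_congr rfl fun i hi => ?_
  rw [map_sum, trace_sum, Finset.sum_eq_single_of_mem i hi fun j hj hji => horth i hi j hj hji.symm,
    hnorm i hi, mul_div_cancel₀ _ hn]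

namespace SimpleGraph

variable {V : Type*} [Fintype V] [DecidableEq V] (G : SimpleGraph V) [DecidableRel G.Adj]
  {R : Type*}

theorem adjMatrix_pow_apply_eq_zero_of_lt_dist [Semiring R] {k : ℕ} {u v : V}
    (h : k < G.dist u v) : (G.adjMatrix R ^ k) u v = 0 := by
  rw [adjMatrix_pow_apply_eq_card_walk, Fintype.card_eq_zero_iff.mpr, Nat.cast_zero]
  exact ⟨fun ⟨q, hq⟩ => (G.dist_le q).not_gt (hq ▸ h)⟩

theorem aeval_adjMatrix_apply_eq_zero_of_natDegree_lt_dist [CommSemiring R] {f : R[X]}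
    {u v : V} (h : f.natDegree < G.dist u v) : aeval (G.adjMatrix R) f u v = 0 := by
  rw [aeval_eq_sum_range, Matrix.sum_apply]
  refine Finset.sum_eq_zero fun k hk => ?_
  rw [Matrix.smul_apply, G.adjMatrix_pow_apply_eq_zero_of_lt_dist
    ((Finset.mem_range_succ_iff.mp hk).trans_lt h), smul_zero]

theorem aeval_adjMatrix_sum_range_succ_apply_of_le_dist [CommSemiring R] {p : ℕ → R[X]} {d : ℕ}
    (hp : ∀ i < d, (p i).natDegree < d) {u v : V} (h : d ≤ G.dist u v) :
    aeval (G.adjMatrix R) (∑ i ∈ Finset.range (d + 1), p i) u v =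
      aeval (G.adjMatrix R) (p d) u v := by
  rw [Finset.sum_range_succ, map_add, map_sum, Matrix.add_apply, Matrix.sum_apply,
    Finset.sum_eq_zero fun i hi => G.aeval_adjMatrix_apply_eq_zero_of_natDegree_lt_dist
      ((hp i (Finset.mem_range.mp hi)).trans_le h), zero_add]

end SimpleGraph

theorem exists_card_eq_kIndepNum {V : Type*} [Fintype V] (G : SimpleGraph V) (k : ℕ) :
    ∃ s : Finset V, s.card = kIndepNum G k ∧ ∀ u ∈ s, ∀ v ∈ s, u ≠ v → k < G.dist u v :=
  Nat.sSup_mem (s := {r | ∃ s : Finset V, s.card = r ∧ ∀ u ∈ s, ∀ v ∈ s, u ≠ v → k < G.dist u v})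
    ⟨0, ∅, rfl, by simp⟩ ⟨Fintype.card V, by rintro r ⟨s, rfl, -⟩; exact s.card_le_univ⟩

theorem card_sub_one_le_sum_sq {V : Type*} [Fintype V] [DecidableEq V] {s : Finset V} {u : V}
    (hu : u ∈ s) {f : V → ℝ} (hf : ∀ v ∈ s, v ≠ u → f v ^ 2 = 1) :
    (s.card : ℝ) - 1 ≤ ∑ v, f v ^ 2 :=
  calc (s.card : ℝ) - 1 = ∑ v ∈ s.erase u, f v ^ 2 := by
        rw [Finset.sum_congr rfl fun v hv => hf v (Finset.mem_of_mem_erase hv)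
          (Finset.ne_of_mem_erase hv), Finset.sum_const, Finset.card_erase_of_mem hu,
          nsmul_one, Nat.cast_pred (Finset.card_pos.mpr ⟨u, hu⟩)]
    _ ≤ ∑ v, f v ^ 2 :=
        Finset.sum_le_sum_of_subset_of_nonneg (Finset.subset_univ _) fun _ _ _ => sq_nonneg _

theorem le_mul_one_add_div {r n c Λ : ℝ} (hr : 0 ≤ r) (hrn : r ≤ n) (hrc : r ≤ 1 + c)
    (hcΛ : c ≤ Λ) (hden : 0 < n + Λ - c) : r ≤ n * (1 + Λ) / (n + Λ - c) := by
  rw [le_div_iff₀ hden]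
  nlinarith [mul_nonneg (hr.trans hrn) (sub_nonneg.mpr hrc),
    mul_nonneg (sub_nonneg.mpr hrn) (sub_nonneg.mpr hcΛ)]

theorem stmt18_general {V : Type*} [Fintype V] [DecidableEq V] (G : SimpleGraph V)
    [DecidableRel G.Adj] (n d : ℕ) (hn : n = Fintype.card V)
    (θ : Fin (d + 1) → ℝ) (m : Fin (d + 1) → ℕ)
    (hroots : (G.adjMatrix ℝ).charpoly.roots =
      Finset.univ.val.bind fun i => Multiset.replicate (m i) (θ i))
    -- `G` is walk-regular:
    (hwr : ∀ p : Polynomial ℝ, ∀ u : V,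
      (Polynomial.aeval (G.adjMatrix ℝ) p) u u =
        Matrix.trace (Polynomial.aeval (G.adjMatrix ℝ) p) / n)
    -- the predistance polynomials `p_0, …, p_d`:
    (p : ℕ → Polynomial ℝ)
    (hpdeg : ∀ i ≤ d, (p i).natDegree = i)
    (hporth : ∀ i ≤ d, ∀ j ≤ d, i ≠ j →
      Matrix.trace (Polynomial.aeval (G.adjMatrix ℝ) (p i * p j)) = 0)
    (hpnorm : ∀ i ≤ d, (p i).eval (θ 0) =
      Matrix.trace (Polynomial.aeval (G.adjMatrix ℝ) (p i * p i)) / n)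
    -- the Hoffman polynomial `H = p_0 + ⋯ + p_d`:
    (H : Polynomial ℝ) (hH : H = ∑ i ∈ Finset.range (d + 1), p i)
    (hH0 : H.eval (θ 0) = n)
    (hHi : ∀ i : Fin (d + 1), i ≠ 0 → H.eval (θ i) = 0)
    -- `Λ = max_{0 ≤ i ≤ d} p_d(θ_i)`:
    (Λ : ℝ) (hΛ : IsGreatest {y : ℝ | ∃ i : Fin (d + 1), y = (p d).eval (θ i)} Λ)
    (hden : 0 < (n : ℝ) + Λ - (p d).eval (θ 0)) :
    (kIndepNum G (d - 1) : ℝ) ≤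
      (n : ℝ) * (1 + Λ) / ((n : ℝ) + Λ - (p d).eval (θ 0)) := by
  subst hn
  obtain ⟨S, hSr, hSdist⟩ := exists_card_eq_kIndepNum G (d - 1)
  have hrn : (kIndepNum G (d - 1) : ℝ) ≤ Fintype.card V := by
    rw [← hSr]
    exact_mod_cast S.card_le_univ
  rcases isEmpty_or_nonempty V with hV | hV
  · simpa [Fintype.card_eq_zero] using hrn
  set A := G.adjMatrix ℝ
  have hA : A.IsHermitian := G.isHermitian_adjMatrix ℝ
  have hHroots : ∀ x ∈ A.charpoly.roots, H.eval x = 0 ∨ H.eval x = Fintype.card V := by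
    intro x hx
    rw [hroots] at hx
    obtain ⟨i, -, hi⟩ := Multiset.mem_bind.mp hx
    rw [Multiset.eq_of_mem_replicate hi]
    rcases eq_or_ne i 0 with rfl | hi0
    exacts [Or.inr hH0, Or.inl (hHi i hi0)]
  have htr : trace (aeval A (H * H)) = Fintype.card V * Fintype.card V := by
    rw [hH, trace_aeval_sum_mul_sum_of_orthogonal (Nat.cast_ne_zero.mpr Fintype.card_ne_zero)
      (fun i hi j hj => hporth i (Finset.mem_range_succ_iff.mp hi) j
        (Finset.mem_range_succ_iff.mp hj))
      (fun i hi => hpnorm i (Finset.mem_range_succ_iff.mp hi)), ← hH, hH0]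
  have hpd : ∀ u, (p d).eval (θ 0) = ∑ v, aeval A (p d) u v ^ 2 := fun u => by
    rw [hpnorm d le_rfl, ← hwr, map_mul, (hA.aeval _).mul_self_apply_self]
  have hpdS : ∀ u ∈ S, ∀ v ∈ S, v ≠ u → aeval A (p d) u v ^ 2 = 1 := fun u hu v hv hvu => by
    have hdist := hSdist u hu v hv hvu.symm
    rw [← G.aeval_adjMatrix_sum_range_succ_apply_of_le_dist
      (fun i hi => (hpdeg i hi.le).trans_lt hi) (by omega), ← hH]
    exact hA.aeval_apply_sq_eq_one hHroots htr (hwr H) u v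
  have hrc : (kIndepNum G (d - 1) : ℝ) ≤ 1 + (p d).eval (θ 0) := by
    rw [← hSr]
    rcases S.eq_empty_or_nonempty with rfl | ⟨u, hu⟩
    · rw [Finset.card_empty, Nat.cast_zero, hpd (Classical.arbitrary V)]
      positivity
    · linarith [hpd u, card_sub_one_le_sum_sq hu (hpdS u hu)]
  exact le_mul_one_add_div (Nat.cast_nonneg _) hrn hrc (hΛ.2 ⟨0, rfl⟩) hden

/-- **Corollary (bound on `α_{d−1}` via the predistance polynomial `p_d`).**
Let `G` be a walk-regular graph on `n` vertices with distinct eigenvalues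
`θ_0 > ⋯ > θ_d`, predistance polynomials `p_0, …, p_d` and Hoffman polynomial
`H = p_0 + ⋯ + p_d` (so `H(θ_0) = n` and `H(θ_i) = 0` for `i ≥ 1`). Let
`Λ = max_{0 ≤ i ≤ d} p_d(θ_i)` and assume `n + Λ − p_d(θ_0) > 0`. Then
`α_{d−1}(G) ≤ n(1 + Λ)/(n + Λ − p_d(θ_0))`. -/
theorem stmt18 {V : Type*} [Fintype V] [DecidableEq V] (G : SimpleGraph V)
    [DecidableRel G.Adj] (n d : ℕ) (hn : n = Fintype.card V) (hd : 1 ≤ d)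
    (θ : Fin (d + 1) → ℝ) (hθ : StrictAnti θ) (m : Fin (d + 1) → ℕ)
    (hroots : (G.adjMatrix ℝ).charpoly.roots =
      Finset.univ.val.bind fun i => Multiset.replicate (m i) (θ i))
    -- `G` is walk-regular:
    (hwr : ∀ p : Polynomial ℝ, ∀ u : V,
      (Polynomial.aeval (G.adjMatrix ℝ) p) u u =
        Matrix.trace (Polynomial.aeval (G.adjMatrix ℝ) p) / n)
    -- the predistance polynomials `p_0, …, p_d`:
    (p : ℕ → Polynomial ℝ)
    (hpdeg : ∀ i ≤ d, (p i).natDegree = i)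
    (hporth : ∀ i ≤ d, ∀ j ≤ d, i ≠ j →
      Matrix.trace (Polynomial.aeval (G.adjMatrix ℝ) (p i * p j)) = 0)
    (hpnorm : ∀ i ≤ d, (p i).eval (θ 0) =
      Matrix.trace (Polynomial.aeval (G.adjMatrix ℝ) (p i * p i)) / n)
    -- the Hoffman polynomial `H = p_0 + ⋯ + p_d`:
    (H : Polynomial ℝ) (hH : H = ∑ i ∈ Finset.range (d + 1), p i)
    (hH0 : H.eval (θ 0) = n)
    (hHi : ∀ i : Fin (d + 1), i ≠ 0 → H.eval (θ i) = 0)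
    -- `Λ = max_{0 ≤ i ≤ d} p_d(θ_i)`:
    (Λ : ℝ) (hΛ : IsGreatest {y : ℝ | ∃ i : Fin (d + 1), y = (p d).eval (θ i)} Λ)
    (hden : 0 < (n : ℝ) + Λ - (p d).eval (θ 0)) :
    (kIndepNum G (d - 1) : ℝ) ≤
      (n : ℝ) * (1 + Λ) / ((n : ℝ) + Λ - (p d).eval (θ 0)) :=
  stmt18_general G n d hn θ m hroots hwr p hpdeg hporth hpnorm H hH hH0 hHi Λ hΛ hden
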